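/- arXiv:2010.03246 — 3 statements merged into one kernel-verified Lean document; each statement's English description precedes it below -/
import Mathlib

section
/- Let u ∈ ℝ^d be a unit vector, h > 0, and for each i let k_i ≥ 0 be an integer with | |u_i| − 2 k_i h | ≤ h. Let n₀ = #{i : k_i = 0}. Then Σ_{i=1}^d k_i ≤ (1/2)(√(d − n₀)/h + (d − n₀)). -/
theorem stmt_3 {d : ℕ} (u : EuclideanSpace ℝ (Fin d)) (hu : ‖u‖ = 1)
    (h : ℝ) (hh : 0 < h) (k : Fin d → ℕ)
    (hk : ∀ i, |(|u i| - 2 * (k i : ℝ) * h)| ≤ h)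
    (n₀ : ℕ) (hn₀ : n₀ = (Finset.univ.filter (fun i => k i = 0)).card) :
    (∑ i, (k i : ℝ)) ≤ (1 / 2) * (Real.sqrt ((d : ℝ) - n₀) / h + ((d : ℝ) - n₀)) := by
  classical
  set S := Finset.univ.filter (fun i => k i ≠ 0) with hS
  have hcard : (S.card : ℝ) = (d : ℝ) - n₀ := by
    have := Finset.card_filter_add_card_filter_not
      (s := (Finset.univ : Finset (Fin d))) (p := fun i => k i = 0)
    simp only [Finset.card_univ, Fintype.card_fin] at this
    have : (Finset.univ.filter (fun i => k i = 0)).card + S.card = d := by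
      simpa [S] using this
    push_cast [hn₀, ← this]
    ring
  -- sum of squares on S ≤ 1
  have hnorm : ∑ i, (u i) ^ 2 = 1 := by
    have := EuclideanSpace.norm_eq u
    rw [hu] at this
    have h1 : Real.sqrt (∑ i, ‖u i‖ ^ 2) = 1 := this.symm
    have h2 : ∑ i, ‖u i‖ ^ 2 = 1 := by
      have := Real.sqrt_eq_one.mp h1
      simpa using this
    simpa [Real.norm_eq_abs, sq_abs] using h2
  have hsq : ∑ i ∈ S, |u i| ^ 2 ≤ 1 := by
    rw [← hnorm]
    have : ∑ i ∈ S, |u i| ^ 2 = ∑ i ∈ S, (u i) ^ 2 := by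
      simp [sq_abs]
    rw [this]
    exact Finset.sum_le_sum_of_subset_of_nonneg (Finset.subset_univ S)
      (fun i _ _ => sq_nonneg _)
  -- Cauchy-Schwarz
  have hCS : ∑ i ∈ S, |u i| ≤ Real.sqrt ((d : ℝ) - n₀) := by
    have h1 : (∑ i ∈ S, |u i|) ^ 2 ≤ (S.card : ℝ) * ∑ i ∈ S, |u i| ^ 2 := by
      exact_mod_cast sq_sum_le_card_mul_sum_sq (s := S) (f := fun i => |u i|)
    have h2 : (∑ i ∈ S, |u i|) ^ 2 ≤ (d : ℝ) - n₀ := by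
      calc (∑ i ∈ S, |u i|) ^ 2 ≤ (S.card : ℝ) * ∑ i ∈ S, |u i| ^ 2 := h1
        _ ≤ (S.card : ℝ) * 1 := by
            apply mul_le_mul_of_nonneg_left hsq (by positivity)
        _ = (d : ℝ) - n₀ := by rw [mul_one, hcard]
    have hnn : 0 ≤ ∑ i ∈ S, |u i| := Finset.sum_nonneg fun i _ => abs_nonneg _
    nlinarith [Real.sq_sqrt (by nlinarith [sq_nonneg (∑ i ∈ S, |u i|)] : (0:ℝ) ≤ (d : ℝ) - n₀),
      Real.sqrt_nonneg ((d : ℝ) - n₀)]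
  -- pointwise bound on S
  have hpt : ∀ i ∈ S, 2 * (k i : ℝ) * h ≤ |u i| + h := by
    intro i hi
    have := abs_le.mp (hk i)
    linarith [this.1]
  have hsum : ∑ i, (k i : ℝ) = ∑ i ∈ S, (k i : ℝ) := by
    rw [← Finset.sum_filter_add_sum_filter_not Finset.univ (fun i => k i ≠ 0)]
    have : ∑ i ∈ Finset.univ.filter (fun i => ¬ k i ≠ 0), (k i : ℝ) = 0 := by
      apply Finset.sum_eq_zero
      intro i hi
      simp only [Finset.mem_filter, not_not] at hi
      simp [hi.2]
    rw [this, add_zero]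
  have hmain : 2 * h * ∑ i, (k i : ℝ) ≤ Real.sqrt ((d : ℝ) - n₀) + ((d : ℝ) - n₀) * h := by
    rw [hsum]
    calc 2 * h * ∑ i ∈ S, (k i : ℝ) = ∑ i ∈ S, 2 * (k i : ℝ) * h := by
          rw [Finset.mul_sum]; apply Finset.sum_congr rfl; intro i _; ring
      _ ≤ ∑ i ∈ S, (|u i| + h) := Finset.sum_le_sum hpt
      _ = (∑ i ∈ S, |u i|) + (S.card : ℝ) * h := by
          rw [Finset.sum_add_distrib, Finset.sum_const, nsmul_eq_mul]
      _ ≤ Real.sqrt ((d : ℝ) - n₀) + ((d : ℝ) - n₀) * h := by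
          rw [hcard]; linarith
  have h2 : ∑ i, (k i : ℝ) ≤ (Real.sqrt ((d:ℝ)-n₀) + ((d:ℝ)-n₀)*h) / (2*h) := by
    rw [le_div_iff₀ (by positivity)]
    linarith
  have heq : (1/2 : ℝ) * (Real.sqrt ((d : ℝ) - n₀) / h + ((d : ℝ) - n₀))
      = (Real.sqrt ((d : ℝ) - n₀) + ((d : ℝ) - n₀) * h) / (2 * h) := by
    field_simp
  rw [heq]
  exact h2
end

section
/- The unit sphere S^{d−1} = {x ∈ ℝ^d : ‖x‖ = 1} cannot be covered by fewer than d closed Euclidean balls of radius r < 1. That is, if S^{d−1} ⊆ ∪_{i=1}^m B(c_i, r) with r < 1, then m ≥ d. -/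
/-!
If fewer than `d` centers are given, their span is a proper subspace, so some unit vector `x` is
orthogonal to every center `c`. By Pythagoras `‖x - c‖² = 1 + ‖c‖² ≥ 1`, so `x` lies in no ball of
radius `r < 1` around a center.
-/

open Module Metric

theorem exists_norm_eq_one_forall_inner_eq_zero {𝕜 E ι : Type*} [RCLike 𝕜]
    [NormedAddCommGroup E] [InnerProductSpace 𝕜 E] [FiniteDimensional 𝕜 E] [Fintype ι]
    (c : ι → E) (hcard : Fintype.card ι < finrank 𝕜 E) :
    ∃ x : E, ‖x‖ = 1 ∧ ∀ i, inner 𝕜 (c i) x = 0 := by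
  set V := Submodule.span 𝕜 (Set.range c)
  have hV : V ≠ ⊤ := fun hV ↦ by
    have : finrank 𝕜 V ≤ Fintype.card ι := finrank_range_le_card c
    rw [hV, finrank_top] at this
    omega
  obtain ⟨v, hvV, hv⟩ := Submodule.exists_mem_ne_zero_of_ne_bot
    (mt Submodule.orthogonal_eq_bot_iff.mp hV)
  refine ⟨(‖v‖⁻¹ : 𝕜) • v, norm_smul_inv_norm hv, fun i ↦ ?_⟩
  rw [inner_smul_right, (Submodule.mem_orthogonal V v).mp hvV (c i) (Submodule.subset_span ⟨i, rfl⟩),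
    mul_zero]

theorem norm_le_dist_of_inner_eq_zero {F : Type*} [NormedAddCommGroup F] [InnerProductSpace ℝ F]
    {x y : F} (h : inner ℝ x y = 0) : ‖x‖ ≤ dist x y := by
  have hpyth := norm_sub_sq_eq_norm_sq_add_norm_sq_real h
  rw [dist_eq_norm]
  nlinarith [norm_nonneg (x - y), norm_nonneg x, mul_self_nonneg ‖y‖]

theorem finrank_le_card_of_sphere_subset_iUnion_closedBall {E ι : Type*} [NormedAddCommGroup E]
    [InnerProductSpace ℝ E] [FiniteDimensional ℝ E] [Fintype ι] {c : ι → E} {r : ℝ} (hr : r < 1)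
    (hcover : sphere (0 : E) 1 ⊆ ⋃ i, closedBall (c i) r) :
    finrank ℝ E ≤ Fintype.card ι := by
  by_contra! hcard
  obtain ⟨x, hx, horth⟩ := exists_norm_eq_one_forall_inner_eq_zero (𝕜 := ℝ) c hcard
  obtain ⟨i, hi⟩ := Set.mem_iUnion.mp (hcover (mem_sphere_zero_iff_norm.mpr hx))
  have hdist : 1 ≤ dist x (c i) :=
    hx ▸ norm_le_dist_of_inner_eq_zero (real_inner_comm x (c i) ▸ horth i)
  linarith [mem_closedBall.mp hi]

theorem stmt_9_general {d : ℕ} (m : ℕ) (r : ℝ) (hr : r < 1)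
    (c : Fin m → EuclideanSpace ℝ (Fin d))
    (hcover : Metric.sphere (0 : EuclideanSpace ℝ (Fin d)) 1 ⊆
      ⋃ i : Fin m, Metric.closedBall (c i) r) :
    d ≤ m := by
  simpa using finrank_le_card_of_sphere_subset_iUnion_closedBall hr hcover

theorem stmt_9 {d : ℕ} (hd : 1 ≤ d) (m : ℕ) (r : ℝ) (hr : r < 1)
    (c : Fin m → EuclideanSpace ℝ (Fin d))
    (hcover : Metric.sphere (0 : EuclideanSpace ℝ (Fin d)) 1 ⊆
      ⋃ i : Fin m, Metric.closedBall (c i) r) :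
    d ≤ m :=
  stmt_9_general m r hr c hcover
end

section
/- Let X be uniformly distributed on the unit sphere S^{d−1} and let X̂ = C(X) be a discrete random vector such that ‖X̂ − X‖² ≤ α almost surely, with 0 < α < 1. Then the entropy satisfies H(X̂) ≥ −log₂ P(α, d), where P(α, d) = (1/2) I_α((d−1)/2, 1/2) is the maximal normalized surface area of a spherical cap of Euclidean radius √α. Consequently any encoding of X̂ requires at least −log₂ P(α, d) bits in expectation. -/
open MeasureTheory ENNReal

/-- Regularized incomplete beta function `I_p(a,b)`. -/
noncomputable def regIncBeta (p a b : ℝ) : ℝ :=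
  (∫ t in (0 : ℝ)..p, t ^ (a - 1) * (1 - t) ^ (b - 1)) /
    (∫ t in (0 : ℝ)..1, t ^ (a - 1) * (1 - t) ^ (b - 1))

/-!
Every cell `C ⁻¹' {v}` of the quantizer lies, up to the null complement of the sphere, in the
cap of radius `√α` around `v`, so every atom `p_v` of `X̂` has mass at most `P`. Hence
`-log₂ p_v ≥ -log₂ P` on every atom, and averaging gives `H(X̂) ≥ -log₂ P`. For a
Kraft-admissible length function `ℓ`, Gibbs' inequality against the subprobability `2^{-ℓ}`
gives the source-coding bound `E ℓ ≥ H(X̂)`.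

As `C` need not be measurable, the `p_v` are outer measures of the cells and we only know
`∑ p_v ≥ 1`, which suffices for both bounds.
-/

noncomputable def entropyBits {ι : Type*} (p : ι → ℝ≥0∞) : ℝ≥0∞ :=
  ∑' v, ENNReal.ofReal (-((p v).toReal * Real.logb 2 (p v).toReal))

namespace Real

lemma mul_neg_logb_le_neg_mul_logb {b x P : ℝ} (hb : 1 < b) (hx : 0 ≤ x) (hxP : x ≤ P) :
    x * -logb b P ≤ -(x * logb b x) := by
  rcases hx.eq_or_lt with rfl | hx
  · simp
  · nlinarith [logb_le_logb_of_le hb hx hxP]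

lemma sub_le_mul_log_sub_log {x q : ℝ} (hx : 0 < x) (hq : 0 < q) :
    x - q ≤ x * (log x - log q) := by
  have h := log_le_sub_one_of_pos (div_pos hq hx)
  rw [log_div hq.ne' hx.ne'] at h
  have hxq : x * (q / x) = q := by field_simp
  nlinarith [mul_le_mul_of_nonneg_left h hx.le]

lemma neg_mul_logb_two_add_le_mul_add_inv_two_pow {x : ℝ} (hx : 0 < x) (ℓ : ℕ) :
    -(x * logb 2 x) + x * (log 2)⁻¹ ≤ x * ℓ + (2⁻¹ : ℝ) ^ ℓ * (log 2)⁻¹ := by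
  have hgibbs := sub_le_mul_log_sub_log hx (by positivity : (0 : ℝ) < 2⁻¹ ^ ℓ)
  have hlog : log ((2⁻¹ : ℝ) ^ ℓ) = -(ℓ * log 2) := by rw [log_pow, log_inv]; ring
  rw [hlog] at hgibbs
  calc -(x * logb 2 x) + x * (log 2)⁻¹ = (x - x * log x) * (log 2)⁻¹ := by rw [logb]; ring
    _ ≤ (x * ℓ * log 2 + 2⁻¹ ^ ℓ) * (log 2)⁻¹ := by gcongr; linarith
    _ = x * ℓ + (2⁻¹ : ℝ) ^ ℓ * (log 2)⁻¹ := by field_simp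

end Real

section Entropy

variable {ι : Type*} {p : ι → ℝ≥0∞}

theorem ofReal_neg_logb_le_entropyBits {P : ℝ} (hpP : ∀ v, p v ≤ ENNReal.ofReal P)
    (hp : 1 ≤ ∑' v, p v) : ENNReal.ofReal (-Real.logb 2 P) ≤ entropyBits p := by
  have hterm : ∀ v, p v * ENNReal.ofReal (-Real.logb 2 P) ≤
      ENNReal.ofReal (-((p v).toReal * Real.logb 2 (p v).toReal)) := by
    intro v
    rcases eq_or_ne (p v) 0 with h0 | h0
    · simp [h0]
    have hP : 0 < P := ENNReal.ofReal_pos.mp ((pos_iff_ne_zero.mpr h0).trans_le (hpP v))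
    calc p v * ENNReal.ofReal (-Real.logb 2 P)
        = ENNReal.ofReal ((p v).toReal * -Real.logb 2 P) := by
          rw [ENNReal.ofReal_mul toReal_nonneg,
            ofReal_toReal (ne_top_of_le_ne_top ofReal_ne_top (hpP v))]
      _ ≤ _ := ENNReal.ofReal_le_ofReal <| Real.mul_neg_logb_le_neg_mul_logb one_lt_two
          toReal_nonneg (toReal_le_of_le_ofReal hP.le (hpP v))
  calc ENNReal.ofReal (-Real.logb 2 P) ≤ (∑' v, p v) * ENNReal.ofReal (-Real.logb 2 P) :=
        le_mul_of_one_le_left' hp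
    _ = ∑' v, p v * ENNReal.ofReal (-Real.logb 2 P) := ENNReal.tsum_mul_right.symm
    _ ≤ entropyBits p := ENNReal.tsum_le_tsum hterm

theorem entropyBits_le_tsum_mul_of_kraft (hp1 : ∀ v, p v ≤ 1) (hp : 1 ≤ ∑' v, p v)
    (ℓ : ι → ℕ)
    (hkraft : ∑' v, (if p v = 0 then 0 else (2 : ℝ≥0∞)⁻¹ ^ ℓ v) ≤ 1) :
    entropyBits p ≤ ∑' v, p v * (ℓ v : ℝ≥0∞) := by
  set K := ENNReal.ofReal (Real.log 2)⁻¹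
  set q : ι → ℝ≥0∞ := fun v => if p v = 0 then 0 else (2 : ℝ≥0∞)⁻¹ ^ ℓ v
  have hterm : ∀ v, ENNReal.ofReal (-((p v).toReal * Real.logb 2 (p v).toReal)) + p v * K ≤
      p v * ℓ v + q v * K := by
    intro v
    rcases eq_or_ne (p v) 0 with h0 | h0
    · simp [q, h0]
    set x := (p v).toReal
    have hfin : p v ≠ ∞ := ne_top_of_le_ne_top one_ne_top (hp1 v)
    have hpv : p v = ENNReal.ofReal x := (ofReal_toReal hfin).symm
    have hx : 0 < x := toReal_pos h0 hfin
    have hx1 : x ≤ 1 := toReal_le_of_le_ofReal zero_le_one (by simpa using hp1 v)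
    have hH : 0 ≤ -(x * Real.logb 2 x) := neg_nonneg.mpr <|
      mul_nonpos_of_nonneg_of_nonpos hx.le (Real.logb_nonpos one_lt_two hx.le hx1)
    have hq : q v = ENNReal.ofReal ((2⁻¹ : ℝ) ^ ℓ v) := by
      rw [show q v = _ from if_neg h0, ofReal_pow (by norm_num), ofReal_inv_of_pos two_pos,
        ofReal_ofNat]
    calc ENNReal.ofReal (-(x * Real.logb 2 x)) + p v * K
        = ENNReal.ofReal (-(x * Real.logb 2 x) + x * (Real.log 2)⁻¹) := by
          rw [ofReal_add hH (by positivity), ENNReal.ofReal_mul hx.le, ← hpv]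
      _ ≤ ENNReal.ofReal (x * ℓ v + (2⁻¹ : ℝ) ^ ℓ v * (Real.log 2)⁻¹) :=
          ENNReal.ofReal_le_ofReal (Real.neg_mul_logb_two_add_le_mul_add_inv_two_pow hx (ℓ v))
      _ = p v * ℓ v + q v * K := by
          rw [ofReal_add (by positivity) (by positivity), ENNReal.ofReal_mul hx.le,
            ENNReal.ofReal_mul (by positivity), ofReal_natCast, ← hpv, hq]
  have hsum : entropyBits p + (∑' v, p v) * K ≤ (∑' v, p v * ℓ v) + (∑' v, q v) * K := by
    simpa only [entropyBits, ENNReal.tsum_add, ENNReal.tsum_mul_right] using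
      ENNReal.tsum_le_tsum hterm
  have hQK : (∑' v, q v) * K ≠ ∞ :=
    mul_ne_top (ne_top_of_le_ne_top one_ne_top hkraft) ofReal_ne_top
  refine (ENNReal.add_le_add_iff_right hQK).mp ?_
  calc entropyBits p + (∑' v, q v) * K ≤ entropyBits p + (∑' v, p v) * K := by
        gcongr entropyBits p + ?_ * K; exact hkraft.trans hp
    _ ≤ _ := hsum

end Entropy

theorem measure_preimage_singleton_le_measure_closedBall {α : Type*} [MeasurableSpace α]
    [PseudoMetricSpace α] {μ : Measure α} {f : α → α} {r : ℝ}
    (hf : ∀ᵐ x ∂μ, dist (f x) x ≤ r) (v : α) : μ (f ⁻¹' {v}) ≤ μ (Metric.closedBall v r) :=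
  measure_mono_ae <| hf.mono fun x hx (hxv : f x = v) =>
    Metric.mem_closedBall.mpr (by rwa [dist_comm, ← hxv])

theorem measure_univ_le_tsum_measure_preimage_singleton {α β : Type*} [MeasurableSpace α]
    (μ : Measure α) {f : α → β} (hf : (Set.range f).Countable) :
    μ Set.univ ≤ ∑' b, μ (f ⁻¹' {b}) :=
  calc μ Set.univ = μ (⋃ b ∈ Set.range f, f ⁻¹' {b}) := by
        rw [Set.biUnion_preimage_singleton, Set.preimage_range]
    _ ≤ ∑' b : Set.range f, μ (f ⁻¹' {(b : β)}) := measure_biUnion_le μ hf _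
    _ ≤ ∑' b, μ (f ⁻¹' {b}) :=
        ENNReal.tsum_comp_le_tsum_of_injective Subtype.val_injective _

theorem stmt_15_general {d : ℕ} (α : ℝ)
    -- the (uniform) distribution of X, concentrated on the unit sphere
    (μS : Measure (EuclideanSpace ℝ (Fin d))) [IsProbabilityMeasure μS]
    (hsphere : μS (Metric.sphere (0 : EuclideanSpace ℝ (Fin d)) 1) = 1)
    (P : ℝ)
    -- every spherical cap of Euclidean radius √α has normalized area at most P
    (hcap : ∀ v : EuclideanSpace ℝ (Fin d),
      μS (Metric.closedBall v (Real.sqrt α)) ≤ ENNReal.ofReal P)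
    -- the discrete compression X̂ = C(X)
    (C : EuclideanSpace ℝ (Fin d) → EuclideanSpace ℝ (Fin d))
    (hcount : (Set.range C).Countable)
    (hC : ∀ x : EuclideanSpace ℝ (Fin d), ‖x‖ = 1 → ‖C x - x‖ ^ 2 ≤ α) :
    -- entropy lower bound H(X̂) ≥ -log₂ P
    ENNReal.ofReal (-(Real.logb 2 P)) ≤
      ∑' v : EuclideanSpace ℝ (Fin d),
        ENNReal.ofReal (-((μS (C ⁻¹' {v})).toReal * Real.logb 2 (μS (C ⁻¹' {v})).toReal)) ∧
    -- consequently, any (prefix-free, i.e. Kraft-admissible) code needs ≥ -log₂ P bits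
    ∀ ℓ : EuclideanSpace ℝ (Fin d) → ℕ,
      (∑' v : EuclideanSpace ℝ (Fin d),
        (if μS (C ⁻¹' {v}) = 0 then 0 else ((2 : ℝ≥0∞))⁻¹ ^ (ℓ v))) ≤ 1 →
      ENNReal.ofReal (-(Real.logb 2 P)) ≤
        ∑' v : EuclideanSpace ℝ (Fin d), μS (C ⁻¹' {v}) * (ℓ v : ℝ≥0∞) := by
  have hsph : ∀ᵐ x ∂μS, x ∈ Metric.sphere 0 1 :=
    mem_ae_iff.mpr ((prob_compl_eq_zero_iff Metric.isClosed_sphere.measurableSet).mpr hsphere)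
  have hdist : ∀ᵐ x ∂μS, dist (C x) x ≤ Real.sqrt α := hsph.mono fun x hx => by
    simpa [dist_eq_norm] using Real.abs_le_sqrt (hC x (by simpa using hx))
  have hmass : 1 ≤ ∑' v, μS (C ⁻¹' {v}) := by
    simpa using measure_univ_le_tsum_measure_preimage_singleton μS hcount
  have hentropy : ENNReal.ofReal (-Real.logb 2 P) ≤ entropyBits fun v => μS (C ⁻¹' {v}) :=
    ofReal_neg_logb_le_entropyBits
      (fun v => (measure_preimage_singleton_le_measure_closedBall hdist v).trans (hcap v)) hmass
  exact ⟨hentropy, fun ℓ hkraft =>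
    hentropy.trans (entropyBits_le_tsum_mul_of_kraft (fun _ => prob_le_one) hmass ℓ hkraft)⟩

theorem stmt_15 {d : ℕ} (hd : 1 ≤ d) (α : ℝ) (hα : 0 < α ∧ α < 1)
    -- the (uniform) distribution of X, concentrated on the unit sphere
    (μS : Measure (EuclideanSpace ℝ (Fin d))) [IsProbabilityMeasure μS]
    (hsphere : μS (Metric.sphere (0 : EuclideanSpace ℝ (Fin d)) 1) = 1)
    (P : ℝ) (hP : P = (1 / 2) * regIncBeta α (((d : ℝ) - 1) / 2) (1 / 2)) (hPpos : 0 < P)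
    -- every spherical cap of Euclidean radius √α has normalized area at most P
    (hcap : ∀ v : EuclideanSpace ℝ (Fin d),
      μS (Metric.closedBall v (Real.sqrt α)) ≤ ENNReal.ofReal P)
    -- the discrete compression X̂ = C(X)
    (C : EuclideanSpace ℝ (Fin d) → EuclideanSpace ℝ (Fin d))
    (hcount : (Set.range C).Countable)
    (hC : ∀ x : EuclideanSpace ℝ (Fin d), ‖x‖ = 1 → ‖C x - x‖ ^ 2 ≤ α) :
    -- entropy lower bound H(X̂) ≥ -log₂ P
    ENNReal.ofReal (-(Real.logb 2 P)) ≤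
      ∑' v : EuclideanSpace ℝ (Fin d),
        ENNReal.ofReal (-((μS (C ⁻¹' {v})).toReal * Real.logb 2 (μS (C ⁻¹' {v})).toReal)) ∧
    -- consequently, any (prefix-free, i.e. Kraft-admissible) code needs ≥ -log₂ P bits
    ∀ ℓ : EuclideanSpace ℝ (Fin d) → ℕ,
      (∑' v : EuclideanSpace ℝ (Fin d),
        (if μS (C ⁻¹' {v}) = 0 then 0 else ((2 : ℝ≥0∞))⁻¹ ^ (ℓ v))) ≤ 1 →
      ENNReal.ofReal (-(Real.logb 2 P)) ≤
        ∑' v : EuclideanSpace ℝ (Fin d), μS (C ⁻¹' {v}) * (ℓ v : ℝ≥0∞) :=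
  stmt_15_general α μS hsphere P hcap C hcount hC
end
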